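/- Let v be a vertex at which exactly one loop α is based, let C = {z ∈ Z : for every i there is a finite path from r(z_i) to v}, and let F be the closure of C in X. Then F is invariant under tail equivalence, and every x ∈ F with s(x) = v equals the infinite path γ = ααα⋯. -/

import Mathlib

/-!
A point `x` lies in the closure of `C` iff for every finite set `T` of finite paths some `z ∈ C`
has exactly the same initial segments from `T` as `x`: these sets of points are the basic
neighbourhoods of the topology generated by the `D_μ` and their complements. If `x = aγ` and
`y = bγ`, replacing the initial segment `a` by `b` maps `C ∩ D_a` into `C` (being able to reach
`v` from every edge is a tail property) and transports these approximations from `x` to `y`.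

By uniqueness of `α`, cutting a closed walk at `v` at its first return to `v` splits off a
copy of `α`, so closed walks at `v` run around `α`. Every initial segment of a path `z ∈ C`
starting at `v` extends to such a walk, hence `z = ααα⋯`; the approximation property then
forces every initial segment of `ααα⋯` to be an initial segment of each `x` in the closure
with `s(x) = v`, so `x = ααα⋯`.
-/

namespace GraphCstar

/-- A directed graph: vertices, edges, source and range maps. -/
structure Graph where
  V : Type
  Ed : Type
  src : Ed → V
  rng : Ed → V

variable (G : Graph)

/-- Validity of a list of edges as a path starting at vertex `v`. -/
def Valid : G.V → List G.Ed → Prop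
  | _, [] => True
  | v, e :: l => G.src e = v ∧ Valid (G.rng e) l

/-- Terminal vertex of a list of edges starting at `v`. -/
def rngTo : G.V → List G.Ed → G.V
  | v, [] => v
  | _, e :: l => rngTo (G.rng e) l

theorem valid_append (l₁ l₂ : List G.Ed) (v : G.V) :
    Valid G v (l₁ ++ l₂) ↔ Valid G v l₁ ∧ Valid G (rngTo G v l₁) l₂ := by
  induction l₁ generalizing v with
  | nil => simp [Valid, rngTo]
  | cons e l ih => simp [Valid, rngTo, ih, and_assoc]

theorem rngTo_append (l₁ l₂ : List G.Ed) (v : G.V) :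
    rngTo G v (l₁ ++ l₂) = rngTo G (rngTo G v l₁) l₂ := by
  induction l₁ generalizing v with
  | nil => rfl
  | cons e l ih => simp [rngTo, ih]

theorem valid_drop {v : G.V} {l : List G.Ed} (n : ℕ) (h : Valid G v l) :
    Valid G (rngTo G v (l.take n)) (l.drop n) := by
  have h' : Valid G v (l.take n ++ l.drop n) := by
    rw [List.take_append_drop]; exact h
  exact ((valid_append G _ _ _).mp h').2

/-- A finite path in the graph `G`; vertices are the paths of length `0`. -/
structure FinPath where
  start : G.V
  edges : List G.Ed
  valid : Valid G start edges

namespace FinPath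

variable {G}

/-- The terminal vertex (range) of a finite path. -/
def rngF (α : FinPath G) : G.V := rngTo G α.start α.edges

/-- The length of a finite path. -/
def len (α : FinPath G) : ℕ := α.edges.length

/-- The finite path of length `0` at the vertex `v`. -/
def vp (v : G.V) : FinPath G := ⟨v, [], trivial⟩

/-- The finite path consisting of the single edge `e`. -/
def ep (e : G.Ed) : FinPath G := ⟨G.src e, [e], ⟨rfl, trivial⟩⟩

/-- Concatenation of finite paths. -/
def concat (α β : FinPath G) (h : β.start = α.rngF) : FinPath G :=
  ⟨α.start, α.edges ++ β.edges,
    (valid_append G _ _ _).mpr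
      ⟨α.valid, by
        show Valid G α.rngF β.edges
        rw [← h]; exact β.valid⟩⟩

theorem rngF_concat (α β : FinPath G) (h : β.start = α.rngF) :
    (α.concat β h).rngF = β.rngF := by
  show rngTo G α.start (α.edges ++ β.edges) = _
  rw [rngTo_append]
  show rngTo G α.rngF β.edges = _
  rw [← h]; rfl

end FinPath

/-- `α` is an initial segment of `β`. -/
def IsPref (α β : FinPath G) : Prop := α.start = β.start ∧ α.edges <+: β.edges

/-- The "remainder" path: if `α` is an initial segment of `β`, the path `μ` with
`β = αμ` (for other inputs the value is junk). -/
def diff (α β : FinPath G) : FinPath G :=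
  ⟨rngTo G β.start (β.edges.take α.edges.length),
    β.edges.drop α.edges.length, valid_drop G _ β.valid⟩

open Classical in
/-- Totalized concatenation of finite paths (junk value when endpoints do not match). -/
noncomputable def catP (α β : FinPath G) : FinPath G :=
  if h : β.start = α.rngF then α.concat β h else α

open Classical in
/-- The product on `T = {(α,β) ∈ Y × Y : r(α) = r(β)} ∪ {z}`, with `z` encoded as `none`. -/
noncomputable def mulT :
    Option (FinPath G × FinPath G) → Option (FinPath G × FinPath G) →
      Option (FinPath G × FinPath G)
  | none, _ => none
  | _, none => none
  | some (α₁, β₁), some (α₂, β₂) =>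
    if IsPref G β₁ α₂ then some (catP G α₁ (diff G β₁ α₂), β₂)
    else if IsPref G α₂ β₁ then some (α₁, catP G β₂ (diff G α₂ β₁))
    else none

/-- The involution on `T`. -/
def starT :
    Option (FinPath G × FinPath G) → Option (FinPath G × FinPath G)
  | none => none
  | some (α, β) => some (β, α)

/-- The subset of `Option (FinPath G × FinPath G)` corresponding to
`T = {(α,β) : r(α) = r(β)} ∪ {z}`. -/
def TsetT : Set (Option (FinPath G × FinPath G)) :=
  {t | ∀ α β : FinPath G, t = some (α, β) → α.rngF = β.rngF}

/-- An infinite path in the graph `G`. -/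
structure InfPath where
  seq : ℕ → G.Ed
  valid : ∀ i, G.src (seq (i + 1)) = G.rng (seq i)

/-- The initial vertex of an infinite path. -/
def InfPath.start {G : Graph} (z : InfPath G) : G.V := G.src (z.seq 0)

/-- Prepending an edge to an infinite path. -/
def consInf (e : G.Ed) (z : InfPath G) (h : z.start = G.rng e) : InfPath G where
  seq := fun n =>
    match n with
    | 0 => e
    | m + 1 => z.seq m
  valid := fun i =>
    match i with
    | 0 => h
    | m + 1 => z.valid m

/-- Prepending a finite edge list to an infinite path (with the starting vertex recorded). -/
def appendInfAux :
    (l : List G.Ed) → (v : G.V) → Valid G v l → (z : InfPath G) →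
      z.start = rngTo G v l → {w : InfPath G // w.start = v}
  | [], _, _, z, h => ⟨z, h⟩
  | e :: l, v, hv, z, h =>
    let w := appendInfAux l (G.rng e) hv.2 z h
    ⟨consInf G e w.1 w.2, hv.1⟩

/-- Concatenation of a finite path with an infinite path. -/
def FinPath.concatInf {G : Graph} (α : FinPath G) (z : InfPath G)
    (h : z.start = α.rngF) : InfPath G :=
  (appendInfAux G α.edges α.start α.valid z h).1

/-- The path space `Y ∪ Z` of all finite and infinite paths. -/
def PathSp := FinPath G ⊕ InfPath G

/-- The initial vertex of a (finite or infinite) path. -/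
def startOf : PathSp G → G.V
  | .inl α => α.start
  | .inr z => z.start

/-- The length of a path, in `ℕ∞`. -/
def lenOf : PathSp G → ℕ∞
  | .inl α => (α.edges.length : ℕ∞)
  | .inr _ => ⊤

/-- The `i`-th edge (0-indexed) of a path, if it exists. -/
def nthEdge : PathSp G → ℕ → Option G.Ed
  | .inl α, i => α.edges[i]?
  | .inr z, i => some (z.seq i)

/-- `x = αγ` for some (finite or infinite, possibly length `0`) path `γ`;
that is, `α` is an initial segment of `x`, i.e. `x ∈ D_α`. -/
def Ext (α : FinPath G) (x : PathSp G) : Prop :=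
  (∃ (β : FinPath G) (h : β.start = α.rngF), x = .inl (α.concat β h)) ∨
  (∃ (w : InfPath G) (h : w.start = α.rngF), x = .inr (α.concatInf w h))

/-- The basic set `D_α ⊆ Y ∪ Z`. -/
def Dset (α : FinPath G) : Set (PathSp G) := {x | Ext G α x}

/-- The topology on the path space, generated by the sets `D_α` and their complements. -/
def pathTop : TopologicalSpace (PathSp G) :=
  .generateFrom (Set.range (Dset G) ∪ Set.range fun α => (Dset G α)ᶜ)

/-- The vertex `v` emits infinitely many edges. -/
def Vinf (v : G.V) : Prop := {e | G.src e = v}.Infinite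

/-- Membership in `X = Y_∞ ∪ Z`. -/
def memX : PathSp G → Prop
  | .inl α => Vinf G α.rngF
  | .inr _ => True

/-- The set `X = Y_∞ ∪ Z`. -/
def Xset : Set (PathSp G) := {x | memX G x}

/-- Tail equivalence of paths: `x = αγ` and `y = βγ` for finite paths `α, β`
and a common (finite or infinite) path `γ`. -/
def TailEq (x y : PathSp G) : Prop :=
  (∃ (α β γ : FinPath G) (h₁ : γ.start = α.rngF) (h₂ : γ.start = β.rngF),
      x = .inl (α.concat γ h₁) ∧ y = .inl (β.concat γ h₂)) ∨
  (∃ (α β : FinPath G) (w : InfPath G) (h₁ : w.start = α.rngF)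
      (h₂ : w.start = β.rngF),
      x = .inr (α.concatInf w h₁) ∧ y = .inr (β.concatInf w h₂))

/-- A subset of the path space is invariant (a union of tail-equivalence classes). -/
def InvariantS (F : Set (PathSp G)) : Prop :=
  ∀ x ∈ F, ∀ y, TailEq G x y → y ∈ F

/-- Membership `(x, k, y) ∈ G` for the path groupoid: `x = αγ`, `y = βγ` and
`k = l(α) - l(β)`. -/
def InG (x : PathSp G) (k : ℤ) (y : PathSp G) : Prop :=
  (∃ (α β γ : FinPath G) (h₁ : γ.start = α.rngF) (h₂ : γ.start = β.rngF),
      x = .inl (α.concat γ h₁) ∧ y = .inl (β.concat γ h₂) ∧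
        k = (α.len : ℤ) - (β.len : ℤ)) ∨
  (∃ (α β : FinPath G) (w : InfPath G) (h₁ : w.start = α.rngF)
      (h₂ : w.start = β.rngF),
      x = .inr (α.concatInf w h₁) ∧ y = .inr (β.concatInf w h₂) ∧
        k = (α.len : ℤ) - (β.len : ℤ))

/-- There is a finite path from `u` to `w`. -/
def Reach (u w : G.V) : Prop := ∃ β : FinPath G, β.start = u ∧ β.rngF = w

/-- A loop based at the vertex `v`. -/
def LoopAt (v : G.V) (α : FinPath G) : Prop :=
  α.edges ≠ [] ∧ α.start = v ∧ α.rngF = v ∧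
    ∀ i e, i + 1 < α.edges.length → α.edges[i]? = some e → G.rng e ≠ v

/-- Condition (K): no vertex has exactly one loop based at it. -/
def CondK : Prop := ¬ ∃ v : G.V, ∃! α : FinPath G, LoopAt G v α

/-- A point of the path space has trivial isotropy if whenever `x = αγ = βγ`
then `l(α) = l(β)`. -/
def TrivIso (x : PathSp G) : Prop :=
  ∀ α β : FinPath G,
    ((∃ (γ : FinPath G) (h₁ : γ.start = α.rngF) (h₂ : γ.start = β.rngF),
        x = .inl (α.concat γ h₁) ∧ x = .inl (β.concat γ h₂)) ∨
     (∃ (w : InfPath G) (h₁ : w.start = α.rngF) (h₂ : w.start = β.rngF),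
        x = .inr (α.concatInf w h₁) ∧ x = .inr (β.concatInf w h₂))) →
    α.len = β.len


/-- The set `C = {z ∈ Z : for every i there is a finite path from r(z_i) to v}`. -/
def Cset (v : G.V) : Set (PathSp G) :=
  {x | ∃ z : InfPath G, x = .inr z ∧ ∀ i : ℕ, Reach G (G.rng (z.seq i)) v}

variable {G}

theorem FinPath.ext {α β : FinPath G} (hs : α.start = β.start) (he : α.edges = β.edges) :
    α = β := by
  cases α; cases β; cases hs; cases he; rfl

theorem InfPath.ext {z w : InfPath G} (h : ∀ i, z.seq i = w.seq i) : z = w := by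
  cases z; cases w; congr; exact funext h

theorem rngTo_take_add_one {v : G.V} {l : List G.Ed} {i : ℕ} {e : G.Ed} (he : l[i]? = some e) :
    rngTo G v (l.take (i + 1)) = G.rng e := by
  rw [List.take_add_one, he, rngTo_append]; rfl

/-- Edgewise description of `x ∈ D_μ` (`mem_Dset_iff`). -/
def PrefixOf (μ : FinPath G) (x : PathSp G) : Prop :=
  startOf G x = μ.start ∧ ∀ i e, μ.edges[i]? = some e → nthEdge G x i = some e

theorem prefixOf_inl_iff {μ β : FinPath G} :
    PrefixOf μ (.inl β) ↔ β.start = μ.start ∧ μ.edges <+: β.edges := by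
  refine and_congr Iff.rfl
    ⟨fun h => List.prefix_iff_getElem?.2 fun i hi => ?_, fun h i e he => ?_⟩
  · exact h i _ (List.getElem?_eq_getElem hi)
  · obtain ⟨hi, rfl⟩ := List.getElem?_eq_some_iff.1 he
    exact List.prefix_iff_getElem?.1 h i hi

theorem PrefixOf.trans {μ ν : FinPath G} {x : PathSp G} (h₁ : PrefixOf μ (.inl ν))
    (h₂ : PrefixOf ν x) : PrefixOf μ x :=
  ⟨h₂.1.trans h₁.1, fun i e he => h₂.2 i e (h₁.2 i e he)⟩

theorem PrefixOf.of_length_le {μ ν : FinPath G} {x : PathSp G} (hμ : PrefixOf μ x)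
    (hν : PrefixOf ν x) (hl : μ.edges.length ≤ ν.edges.length) : PrefixOf μ (.inl ν) := by
  refine ⟨hν.1.symm.trans hμ.1, fun i e he => ?_⟩
  obtain ⟨hi, rfl⟩ := List.getElem?_eq_some_iff.1 he
  have hν' := hν.2 i _ (List.getElem?_eq_getElem (hi.trans_le hl))
  rw [hμ.2 i _ he, Option.some_inj] at hν'
  exact hν' ▸ List.getElem?_eq_getElem _

theorem prefixOf_iff_of_length_le {μ b : FinPath G} {x : PathSp G} (hb : PrefixOf b x)
    (hl : μ.edges.length ≤ b.edges.length) : PrefixOf μ x ↔ PrefixOf μ (.inl b) :=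
  ⟨fun h => h.of_length_le hb hl, fun h => h.trans hb⟩

namespace InfPath

def drop (z : InfPath G) (n : ℕ) : InfPath G :=
  ⟨fun i => z.seq (n + i), fun i => z.valid (n + i)⟩

theorem valid_and_rngTo_map_range (z : InfPath G) : ∀ n,
    Valid G z.start ((List.range n).map z.seq) ∧
      rngTo G z.start ((List.range n).map z.seq) = G.src (z.seq n)
  | 0 => ⟨trivial, rfl⟩
  | n + 1 => by
    obtain ⟨hv, hr⟩ := valid_and_rngTo_map_range z n
    rw [List.range_succ, List.map_append, valid_append, rngTo_append, hr]
    exact ⟨⟨hv, rfl, trivial⟩, (z.valid n).symm⟩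

theorem start_drop (z : InfPath G) (n : ℕ) : (z.drop n).start = G.src (z.seq n) := rfl

def take (z : InfPath G) (n : ℕ) : FinPath G :=
  ⟨z.start, (List.range n).map z.seq, (valid_and_rngTo_map_range z n).1⟩

theorem length_edges_take (z : InfPath G) (n : ℕ) : (z.take n).edges.length = n := by
  simp [take]

theorem rngF_take (z : InfPath G) (n : ℕ) : (z.take n).rngF = G.src (z.seq n) :=
  (valid_and_rngTo_map_range z n).2

theorem getElem?_edges_take (z : InfPath G) {n i : ℕ} (hi : i < n) :
    (z.take n).edges[i]? = some (z.seq i) := by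
  simp [take, hi]

theorem prefixOf_take (z : InfPath G) (n : ℕ) : PrefixOf (z.take n) (.inr z) := by
  refine ⟨rfl, fun i e he => ?_⟩
  have hi : i < n := z.length_edges_take n ▸ (List.getElem?_eq_some_iff.1 he).1
  rw [getElem?_edges_take z hi] at he
  exact he

end InfPath

theorem PrefixOf.eq_take {μ : FinPath G} {z : InfPath G} (h : PrefixOf μ (.inr z)) :
    μ = z.take μ.edges.length := by
  refine FinPath.ext h.1.symm (List.ext_getElem (z.length_edges_take _).symm fun i hi _ => ?_)
  have h' := h.2 i _ (List.getElem?_eq_getElem hi)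
  exact Option.some_inj.1
    (h'.symm.trans ((List.getElem?_eq_getElem _).symm.trans (z.getElem?_edges_take hi)).symm)

theorem PrefixOf.src_seq {μ : FinPath G} {z : InfPath G} (h : PrefixOf μ (.inr z)) :
    G.src (z.seq μ.edges.length) = μ.rngF := by
  rw [h.eq_take, InfPath.rngF_take, InfPath.length_edges_take]

theorem appendInfAux_seq_of_lt : ∀ (l : List G.Ed) (v : G.V) (hv : Valid G v l) (z : InfPath G)
    (h : z.start = rngTo G v l) (i : ℕ) (hi : i < l.length),
    (appendInfAux G l v hv z h).1.seq i = l[i]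
  | _ :: _, _, _, _, _, 0, _ => rfl
  | _ :: l, _, hv, z, h, i + 1, hi =>
    appendInfAux_seq_of_lt l _ hv.2 z h i (Nat.lt_of_succ_lt_succ hi)

theorem appendInfAux_seq_add : ∀ (l : List G.Ed) (v : G.V) (hv : Valid G v l) (z : InfPath G)
    (h : z.start = rngTo G v l) (i : ℕ),
    (appendInfAux G l v hv z h).1.seq (l.length + i) = z.seq i
  | [], _, _, _, _, i => by simp [appendInfAux]
  | _ :: l, _, hv, z, h, i => by
    rw [List.length_cons, Nat.add_right_comm]
    exact appendInfAux_seq_add l _ hv.2 z h i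

namespace FinPath

theorem concatInf_start (a : FinPath G) (u : InfPath G) (h : u.start = a.rngF) :
    (a.concatInf u h).start = a.start :=
  (appendInfAux G a.edges a.start a.valid u h).2

theorem concatInf_seq_of_lt (a : FinPath G) (u : InfPath G) (h : u.start = a.rngF) {i : ℕ}
    (hi : i < a.edges.length) : (a.concatInf u h).seq i = a.edges[i] :=
  appendInfAux_seq_of_lt a.edges a.start a.valid u h i hi

theorem concatInf_seq_add (a : FinPath G) (u : InfPath G) (h : u.start = a.rngF) (i : ℕ) :
    (a.concatInf u h).seq (a.edges.length + i) = u.seq i :=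
  appendInfAux_seq_add a.edges a.start a.valid u h i

theorem prefixOf_concat (a γ : FinPath G) (h : γ.start = a.rngF) :
    PrefixOf a (.inl (a.concat γ h)) :=
  prefixOf_inl_iff.2 ⟨rfl, List.prefix_append _ _⟩

theorem prefixOf_concatInf (a : FinPath G) (u : InfPath G) (h : u.start = a.rngF) :
    PrefixOf a (.inr (a.concatInf u h)) := by
  refine ⟨a.concatInf_start u h, fun i e he => ?_⟩
  obtain ⟨hi, rfl⟩ := List.getElem?_eq_some_iff.1 he
  exact congrArg some (a.concatInf_seq_of_lt u h hi)

end FinPath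

theorem diff_start {a β : FinPath G} (h : PrefixOf a (.inl β)) :
    (diff G a β).start = a.rngF := by
  obtain ⟨hs, hp⟩ := prefixOf_inl_iff.1 h
  simp only [diff, ← List.prefix_iff_eq_take.1 hp, hs]
  rfl

theorem PrefixOf.eq_concat_diff {a β : FinPath G} (h : PrefixOf a (.inl β)) :
    β = a.concat (diff G a β) (diff_start h) :=
  FinPath.ext (prefixOf_inl_iff.1 h).1 (List.prefix_iff_eq_append.1 (prefixOf_inl_iff.1 h).2).symm

theorem PrefixOf.eq_concatInf_drop {a : FinPath G} {z : InfPath G} (h : PrefixOf a (.inr z)) :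
    z = a.concatInf (z.drop a.edges.length) ((z.start_drop _).trans h.src_seq) := by
  refine InfPath.ext fun i => ?_
  rcases lt_or_ge i a.edges.length with hi | hi
  · rw [FinPath.concatInf_seq_of_lt _ _ _ hi]
    exact Option.some_inj.1 (h.2 i _ (List.getElem?_eq_getElem hi))
  · obtain ⟨j, rfl⟩ := Nat.exists_eq_add_of_le hi
    rw [FinPath.concatInf_seq_add]
    rfl

theorem mem_Dset_iff {a : FinPath G} {x : PathSp G} : x ∈ Dset G a ↔ PrefixOf a x := by
  refine ⟨?_, fun h => ?_⟩
  · rintro (⟨γ, h, rfl⟩ | ⟨u, h, rfl⟩)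
    exacts [a.prefixOf_concat γ h, a.prefixOf_concatInf u h]
  · cases x with
    | inl β => exact .inl ⟨_, _, congrArg Sum.inl h.eq_concat_diff⟩
    | inr z => exact .inr ⟨_, _, congrArg Sum.inr h.eq_concatInf_drop⟩

theorem mem_closure_generateFrom_iff {X ι : Type*} (D : ι → Set X) {s : Set X} {a : X} :
    a ∈ @closure X (.generateFrom (Set.range D ∪ Set.range fun i => (D i)ᶜ)) s ↔
      ∀ T : Finset ι, ∃ y ∈ s, ∀ i ∈ T, (y ∈ D i ↔ a ∈ D i) := by
  let _ := TopologicalSpace.generateFrom (Set.range D ∪ Set.range fun i => (D i)ᶜ)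
  refine ⟨fun ha T => ?_, fun h => ?_⟩
  · have hU : IsOpen (⋂ i ∈ T, {y | y ∈ D i ↔ a ∈ D i}) := by
      refine isOpen_biInter_finset fun i _ => ?_
      by_cases hi : a ∈ D i
      · simpa [hi] using TopologicalSpace.isOpen_generateFrom_of_mem (.inl ⟨i, rfl⟩)
      · simpa [hi] using TopologicalSpace.isOpen_generateFrom_of_mem (.inr ⟨i, rfl⟩)
    obtain ⟨y, hyU, hys⟩ := mem_closure_iff.1 ha _ hU (by simp)
    exact ⟨y, hys, by simpa using hyU⟩
  · choose f hfs hf using h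
    refine mem_closure_of_tendsto (b := Filter.atTop) ?_ (.of_forall hfs)
    rw [TopologicalSpace.tendsto_nhds_generateFrom_iff]
    rintro _ (⟨i, rfl⟩ | ⟨i, rfl⟩) ha <;>
      filter_upwards [Filter.eventually_ge_atTop {i}] with T hT
    · exact (hf T i (hT (Finset.mem_singleton_self i))).2 ha
    · exact fun hT' => ha ((hf T i (hT (Finset.mem_singleton_self i))).1 hT')

theorem mem_closure_pathTop_iff {s : Set (PathSp G)} {x : PathSp G} :
    x ∈ @closure _ (pathTop G) s ↔
      ∀ T : Finset (FinPath G), ∃ y ∈ s, ∀ μ ∈ T, (PrefixOf μ y ↔ PrefixOf μ x) := by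
  simp only [← mem_Dset_iff]
  exact mem_closure_generateFrom_iff (Dset G)

theorem exists_prefixOf_of_mem_closure {s : Set (PathSp G)} {x : PathSp G} {δ : FinPath G}
    (hx : x ∈ @closure _ (pathTop G) s) (hδ : PrefixOf δ x) : ∃ y ∈ s, PrefixOf δ y := by
  obtain ⟨y, hys, hy⟩ := mem_closure_pathTop_iff.1 hx {δ}
  exact ⟨y, hys, (hy δ (Finset.mem_singleton_self δ)).2 hδ⟩

theorem prefixOf_of_mem_closure {s : Set (PathSp G)} {x : PathSp G} {δ μ : FinPath G}
    (hx : x ∈ @closure _ (pathTop G) s) (hδ : PrefixOf δ x)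
    (h : ∀ y ∈ s, PrefixOf δ y → PrefixOf μ y) : PrefixOf μ x := by
  classical
  obtain ⟨y, hys, hy⟩ := mem_closure_pathTop_iff.1 hx {δ, μ}
  exact (hy μ (by simp)).1 (h y hys ((hy δ (by simp)).2 hδ))

/-- `y` arises from `x` by replacing its initial segment `a` with `b`. -/
def PrefixSwap (a b : FinPath G) (x y : PathSp G) : Prop :=
  PrefixOf a x ∧ PrefixOf b y ∧ a.rngF = b.rngF ∧
    ∀ i, nthEdge G x (a.edges.length + i) = nthEdge G y (b.edges.length + i)

theorem catP_diff {a b μ : FinPath G} (hb : PrefixOf b (.inl μ)) (hr : a.rngF = b.rngF) :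
    (catP G a (diff G b μ)).start = a.start ∧
      (catP G a (diff G b μ)).edges = a.edges ++ μ.edges.drop b.edges.length := by
  rw [catP, dif_pos ((diff_start hb).trans hr.symm)]
  exact ⟨rfl, rfl⟩

theorem PrefixSwap.prefixOf_iff {a b μ : FinPath G} {x y : PathSp G} (hxy : PrefixSwap a b x y)
    (hb : PrefixOf b (.inl μ)) : PrefixOf μ y ↔ PrefixOf (catP G a (diff G b μ)) x := by
  obtain ⟨hax, hby, hr, htail⟩ := hxy
  obtain ⟨hstart, hedges⟩ := catP_diff hb hr
  refine ⟨fun hμ => ⟨hax.1.trans hstart.symm, fun i e hi => ?_⟩,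
    fun hμ => ⟨hby.1.trans hb.1.symm, fun i e hi => ?_⟩⟩
  · rw [hedges] at hi
    rcases lt_or_ge i a.edges.length with hia | hia
    · exact hax.2 i e (by rwa [List.getElem?_append_left hia] at hi)
    · obtain ⟨j, rfl⟩ := Nat.exists_eq_add_of_le hia
      rw [List.getElem?_append_right (Nat.le_add_right _ _), Nat.add_sub_cancel_left,
        List.getElem?_drop] at hi
      rw [htail]
      exact hμ.2 _ e hi
  · rcases lt_or_ge i b.edges.length with hib | hib
    · refine hby.2 i e ?_
      rw [List.prefix_iff_getElem?.1 (prefixOf_inl_iff.1 hb).2 i hib] at hi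
      rwa [List.getElem?_eq_getElem hib]
    · obtain ⟨j, rfl⟩ := Nat.exists_eq_add_of_le hib
      rw [← htail]
      refine hμ.2 _ e ?_
      rwa [hedges, List.getElem?_append_right (Nat.le_add_right _ _), Nat.add_sub_cancel_left,
        List.getElem?_drop]

theorem mem_closure_of_prefixSwap {s : Set (PathSp G)} {a b : FinPath G} {x y : PathSp G}
    (hx : x ∈ @closure _ (pathTop G) s) (hxy : PrefixSwap a b x y)
    (hs : ∀ w ∈ s, PrefixOf a w → ∃ z ∈ s, PrefixSwap a b w z) :
    y ∈ @closure _ (pathTop G) s := by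
  classical
  rw [mem_closure_pathTop_iff] at hx ⊢
  intro T
  -- `w` has to agree with `x` on `a` and on the transports `a · (μ ∖ b)` of the `μ ∈ T`
  obtain ⟨w, hws, hw⟩ := hx (insert a (T.image fun μ => catP G a (diff G b μ)))
  obtain ⟨z, hzs, hwz⟩ := hs w hws ((hw a (Finset.mem_insert_self _ _)).2 hxy.1)
  refine ⟨z, hzs, fun μ hμ => ?_⟩
  rcases le_or_gt μ.edges.length b.edges.length with hl | hl
  · rw [prefixOf_iff_of_length_le hwz.2.1 hl, prefixOf_iff_of_length_le hxy.2.1 hl]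
  by_cases hbμ : PrefixOf b (.inl μ)
  · rw [hwz.prefixOf_iff hbμ, hxy.prefixOf_iff hbμ]
    exact hw _ (Finset.mem_insert_of_mem (Finset.mem_image_of_mem _ hμ))
  · have hnot : ∀ {u}, PrefixOf b u → ¬ PrefixOf μ u := fun hb hμ =>
      hbμ (hb.of_length_le hμ hl.le)
    exact iff_of_false (hnot hwz.2.1) (hnot hxy.2.1)

theorem prefixSwap_concat (a b γ : FinPath G) (h₁ : γ.start = a.rngF)
    (h₂ : γ.start = b.rngF) :
    PrefixSwap a b (.inl (a.concat γ h₁)) (.inl (b.concat γ h₂)) := by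
  refine ⟨a.prefixOf_concat γ h₁, b.prefixOf_concat γ h₂, h₁.symm.trans h₂,
    fun i => ?_⟩
  simp only [nthEdge, FinPath.concat, List.getElem?_append_right (Nat.le_add_right _ _),
    Nat.add_sub_cancel_left]

theorem prefixSwap_concatInf (a b : FinPath G) (u : InfPath G) (h₁ : u.start = a.rngF)
    (h₂ : u.start = b.rngF) :
    PrefixSwap a b (.inr (a.concatInf u h₁)) (.inr (b.concatInf u h₂)) := by
  refine ⟨a.prefixOf_concatInf u h₁, b.prefixOf_concatInf u h₂, h₁.symm.trans h₂,
    fun i => ?_⟩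
  simp only [nthEdge, FinPath.concatInf_seq_add]

theorem Reach.trans {u w x : G.V} (h₁ : Reach G u w) (h₂ : Reach G w x) : Reach G u x := by
  obtain ⟨β, rfl, rfl⟩ := h₁
  obtain ⟨γ, hγ, rfl⟩ := h₂
  exact ⟨β.concat γ hγ, rfl, FinPath.rngF_concat β γ hγ⟩

theorem reach_rng_seq (z : InfPath G) {i j : ℕ} (hij : i ≤ j) :
    Reach G (G.rng (z.seq i)) (G.rng (z.seq j)) := by
  refine ⟨(z.drop (i + 1)).take (j - i), z.valid i, ?_⟩
  rw [InfPath.rngF_take, ← z.valid j]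
  simp only [InfPath.drop]
  rw [show i + 1 + (j - i) = j + 1 by omega]

theorem inr_mem_Cset_iff {v : G.V} {z : InfPath G} :
    (.inr z : PathSp G) ∈ Cset G v ↔ ∀ i, Reach G (G.rng (z.seq i)) v :=
  ⟨fun ⟨_, h, hr⟩ => Sum.inr_injective h ▸ hr, fun h => ⟨z, rfl, h⟩⟩

theorem inr_mem_Cset_of_forall_ge {v : G.V} {z : InfPath G} (N : ℕ)
    (h : ∀ i ≥ N, Reach G (G.rng (z.seq i)) v) : (.inr z : PathSp G) ∈ Cset G v := by
  refine inr_mem_Cset_iff.2 fun i => ?_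
  rcases le_total N i with hi | hi
  exacts [h i hi, (reach_rng_seq z hi).trans (h N le_rfl)]

theorem exists_prefixSwap_mem_Cset {v : G.V} {a b : FinPath G} (hr : a.rngF = b.rngF) :
    ∀ w ∈ Cset G v, PrefixOf a w → ∃ z ∈ Cset G v, PrefixSwap a b w z := by
  rintro _ ⟨w, rfl, hw⟩ ha
  have hu : (w.drop a.edges.length).start = a.rngF := (w.start_drop _).trans ha.src_seq
  have hswap := prefixSwap_concatInf a b _ hu (hu.trans hr)
  rw [← ha.eq_concatInf_drop] at hswap
  refine ⟨_, inr_mem_Cset_of_forall_ge b.edges.length fun i hi => ?_, hswap⟩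
  obtain ⟨j, rfl⟩ := Nat.exists_eq_add_of_le hi
  rw [FinPath.concatInf_seq_add]
  exact hw _

theorem memX_of_tailEq {x y : PathSp G} (hx : memX G x) (hxy : TailEq G x y) : memX G y := by
  rcases hxy with ⟨a, b, γ, h₁, h₂, rfl, rfl⟩ | ⟨_, _, _, _, _, rfl, rfl⟩
  · change Vinf G (b.concat γ h₂).rngF
    rw [FinPath.rngF_concat]
    rwa [memX, FinPath.rngF_concat] at hx
  · trivial

theorem mem_closure_Cset_of_tailEq {v : G.V} {x y : PathSp G}
    (hx : x ∈ @closure _ (pathTop G) (Cset G v)) (hxy : TailEq G x y) :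
    y ∈ @closure _ (pathTop G) (Cset G v) := by
  rcases hxy with ⟨a, b, γ, h₁, h₂, rfl, rfl⟩ | ⟨a, b, u, h₁, h₂, rfl, rfl⟩
  · exact mem_closure_of_prefixSwap hx (prefixSwap_concat a b γ h₁ h₂)
      (exists_prefixSwap_mem_Cset (h₁.symm.trans h₂))
  · exact mem_closure_of_prefixSwap hx (prefixSwap_concatInf a b u h₁ h₂)
      (exists_prefixSwap_mem_Cset (h₁.symm.trans h₂))

theorem invariantS_Xset_inter_closure_Cset (v : G.V) :
    InvariantS G (Xset G ∩ @closure (PathSp G) (pathTop G) (Cset G v)) :=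
  fun _ hx _ hxy => ⟨memX_of_tailEq hx.1 hxy, mem_closure_Cset_of_tailEq hx.2 hxy⟩

/-- Cut the walk at its first return to `v`. -/
theorem exists_loopAt_prefix {v : G.V} {l : List G.Ed} (hv : Valid G v l) (hr : rngTo G v l = v)
    (hl : l ≠ []) : ∃ β : FinPath G, LoopAt G v β ∧ β.edges <+: l := by
  classical
  have hex : ∃ k, 0 < k ∧ k ≤ l.length ∧ rngTo G v (l.take k) = v :=
    ⟨l.length, List.length_pos_iff.2 hl, le_rfl, by rwa [List.take_length]⟩
  obtain ⟨hk0, hkl, hkv⟩ := Nat.find_spec hex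
  have hvk : Valid G v (l.take (Nat.find hex)) :=
    ((valid_append G _ _ v).1 (by rwa [List.take_append_drop])).1
  refine ⟨⟨v, _, hvk⟩, ⟨?_, rfl, hkv, fun i e hi he hre => ?_⟩, List.take_prefix _ _⟩
  · exact List.ne_nil_of_length_pos (by simp only [List.length_take]; omega)
  · have hik : i + 1 < Nat.find hex := hi.trans_le (List.length_take_le _ _)
    rw [List.getElem?_take, if_pos (by omega)] at he
    exact Nat.find_min hex hik ⟨by omega, by omega, (rngTo_take_add_one he).trans hre⟩

theorem getElem?_eq_of_closedWalk {v : G.V} {α : FinPath G} (hloop : LoopAt G v α)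
    (huniq : ∀ β : FinPath G, LoopAt G v β → β = α) {l : List G.Ed} (hv : Valid G v l)
    (hr : rngTo G v l = v) {j : ℕ} (hj : j < l.length) :
    l[j]? = α.edges[j % α.edges.length]? := by
  obtain ⟨β, hβ, hβl⟩ := exists_loopAt_prefix hv hr (List.ne_nil_of_length_pos (by omega))
  rw [huniq β hβ] at hβl
  obtain ⟨l', rfl⟩ := hβl
  rcases lt_or_ge j α.edges.length with hjα | hjα
  · rw [Nat.mod_eq_of_lt hjα, List.getElem?_append_left hjα]
  · have hα : rngTo G v α.edges = v := hloop.2.1 ▸ hloop.2.2.1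
    rw [valid_append, hα] at hv
    rw [rngTo_append, hα] at hr
    have hpos := List.length_pos_iff.2 hloop.1
    rw [List.getElem?_append_right hjα, Nat.mod_eq_sub_mod hjα]
    exact getElem?_eq_of_closedWalk hloop huniq hv.2 hr (by rw [List.length_append] at hj; omega)
termination_by l.length
decreasing_by subst_vars; simp only [List.length_append]; omega

/-- Every initial segment of `z` extends to a closed walk at `v`. -/
theorem getElem?_eq_seq_of_inr_mem_Cset {v : G.V} {α : FinPath G} (hloop : LoopAt G v α)
    (huniq : ∀ β : FinPath G, LoopAt G v β → β = α) {z : InfPath G}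
    (hz : (.inr z : PathSp G) ∈ Cset G v) (hzv : z.start = v) (i : ℕ) :
    α.edges[i % α.edges.length]? = some (z.seq i) := by
  obtain ⟨β, hβs, hβr⟩ := inr_mem_Cset_iff.1 hz i
  have hβ : β.start = (z.take (i + 1)).rngF := by rw [InfPath.rngF_take, z.valid i, hβs]
  set c := (z.take (i + 1)).concat β hβ
  have hc : rngTo G v c.edges = v :=
    calc rngTo G v c.edges = c.rngF := by rw [← hzv]; rfl
      _ = v := (FinPath.rngF_concat _ _ hβ).trans hβr
  have hi : i < c.edges.length := by
    simp only [c, FinPath.concat, List.length_append, InfPath.length_edges_take]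
    omega
  rw [← getElem?_eq_of_closedWalk hloop huniq (hzv ▸ c.valid) hc hi]
  simp only [c, FinPath.concat]
  rw [List.getElem?_append_left (by simp [InfPath.length_edges_take]),
    z.getElem?_edges_take (Nat.lt_succ_self i)]

theorem eq_of_inr_mem_Cset {v : G.V} {α : FinPath G} (hloop : LoopAt G v α)
    (huniq : ∀ β : FinPath G, LoopAt G v β → β = α) {z w : InfPath G}
    (hz : (.inr z : PathSp G) ∈ Cset G v) (hzv : z.start = v)
    (hw : (.inr w : PathSp G) ∈ Cset G v) (hwv : w.start = v) : z = w :=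
  InfPath.ext fun i => Option.some_inj.1 <|
    (getElem?_eq_seq_of_inr_mem_Cset hloop huniq hz hzv i).symm.trans
      (getElem?_eq_seq_of_inr_mem_Cset hloop huniq hw hwv i)

theorem eq_periodic_of_mem_closure_Cset {v : G.V} {α : FinPath G} (hloop : LoopAt G v α)
    (huniq : ∀ β : FinPath G, LoopAt G v β → β = α) {x : PathSp G}
    (hx : x ∈ @closure _ (pathTop G) (Cset G v)) (hxv : startOf G x = v) :
    ∃ w : InfPath G, x = .inr w ∧ ∀ i, α.edges[i % α.edges.length]? = some (w.seq i) := by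
  have hv : PrefixOf (FinPath.vp v) x := ⟨hxv, by simp [FinPath.vp]⟩
  obtain ⟨_, ⟨z, rfl, hzC⟩, hzv⟩ := exists_prefixOf_of_mem_closure hx hv
  have hz := inr_mem_Cset_iff.2 hzC
  have htake (n : ℕ) : PrefixOf (z.take n) x := by
    refine prefixOf_of_mem_closure hx hv ?_
    rintro _ ⟨z', rfl, hz'C⟩ hz'v
    rw [eq_of_inr_mem_Cset hloop huniq (inr_mem_Cset_iff.2 hz'C) hz'v.1 hz hzv.1]
    exact z.prefixOf_take n
  cases x with
  | inl β =>
    have := (prefixOf_inl_iff.1 (htake (β.edges.length + 1))).2.length_le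
    simp [InfPath.length_edges_take] at this
  | inr w =>
    refine ⟨w, rfl, fun i => ?_⟩
    rw [getElem?_eq_seq_of_inr_mem_Cset hloop huniq hz hzv.1 i]
    exact ((htake (i + 1)).2 i _ (z.getElem?_edges_take (Nat.lt_succ_self i))).symm

theorem unique_loop_closure_general (G : Graph)
    (v : G.V) (α : FinPath G)
    (hloop : LoopAt G v α) (huniq : ∀ β : FinPath G, LoopAt G v β → β = α) :
    InvariantS G (Xset G ∩ @closure (PathSp G) (pathTop G) (Cset G v)) ∧
    ∀ x ∈ Xset G ∩ @closure (PathSp G) (pathTop G) (Cset G v),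
      startOf G x = v →
        ∃ w : InfPath G, x = Sum.inr w ∧
          ∀ i : ℕ, α.edges[i % α.edges.length]? = some (w.seq i) :=
  ⟨invariantS_Xset_inter_closure_Cset v,
    fun _ hx hxv => eq_periodic_of_mem_closure_Cset hloop huniq hx.2 hxv⟩

/-- Let `v` be a vertex at which exactly one loop `α` is based, let
`C = {z ∈ Z : ∀ i, ∃ path from r(z_i) to v}`, and let `F` be the closure of `C` in `X`
(i.e. `X ∩ closure C`). Then `F` is invariant under tail equivalence, and every `x ∈ F`
with `s(x) = v` equals the infinite path `γ = ααα⋯`. -/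
theorem unique_loop_closure (G : Graph) [Countable G.V] [Countable G.Ed]
    (hns : ∀ v : G.V, ∃ e : G.Ed, G.src e = v)
    (v : G.V) (α : FinPath G)
    (hloop : LoopAt G v α) (huniq : ∀ β : FinPath G, LoopAt G v β → β = α) :
    InvariantS G (Xset G ∩ @closure (PathSp G) (pathTop G) (Cset G v)) ∧
    ∀ x ∈ Xset G ∩ @closure (PathSp G) (pathTop G) (Cset G v),
      startOf G x = v →
        ∃ w : InfPath G, x = Sum.inr w ∧
          ∀ i : ℕ, α.edges[i % α.edges.length]? = some (w.seq i) :=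
  unique_loop_closure_general G v α hloop huniq

end GraphCstar
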